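/- arXiv:1404.0895 — 2 statements merged into one kernel-verified Lean document; each statement's English description precedes it below -/
import Mathlib

section
/- Let f ∈ 𝒩^{μ,λ}_Σ(φ) where φ(z) = 1 + B₁z + B₂z² + ... with B₁ > 0 and all Bⱼ real. Then with p₂, q₂ the second Carathéodory coefficients coming from the two subordinations, a₂² = B₁³(p₂ + q₂) / (2(μ+1)(2λ+μ)B₁² + 4(B₁ − B₂)(λ+μ)²), provided the denominator is nonzero. -/
theorem stmt_7_general (μ lam B₁ B₂ : ℝ)
    (a₂ a₃ p₁ p₂ q₁ q₂ : ℂ)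
    (h1 : ((lam:ℂ) + μ) * a₂ = (B₁:ℂ) * p₁ / 2)
    (h2 : -(((lam:ℂ) + μ)) * a₂ = (B₁:ℂ) * q₁ / 2)
    (h3 : (2*(lam:ℂ) + μ) * (a₃ + a₂^2/2 * ((μ:ℂ) - 1))
        = (B₁:ℂ)/2 * (p₂ - p₁^2/2) + (B₂:ℂ)/4 * p₁^2)
    (h4 : (2*(lam:ℂ) + μ) * (a₂^2/2 * ((μ:ℂ) + 3) - a₃)
        = (B₁:ℂ)/2 * (q₂ - q₁^2/2) + (B₂:ℂ)/4 * q₁^2)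
    (hden : (2*((μ:ℂ)+1)*(2*(lam:ℂ)+μ)*(B₁:ℂ)^2 + 4*((B₁:ℂ)-(B₂:ℂ))*((lam:ℂ)+μ)^2) ≠ 0) :
    a₂^2 = (B₁:ℂ)^3 * (p₂ + q₂) /
      (2*((μ:ℂ)+1)*(2*(lam:ℂ)+μ)*(B₁:ℂ)^2 + 4*((B₁:ℂ)-(B₂:ℂ))*((lam:ℂ)+μ)^2) := by
  have hsum : (2*(lam:ℂ) + μ) * ((μ:ℂ) + 1) * a₂^2
      = (B₁:ℂ)/2 * (p₂ + q₂) + ((B₂:ℂ) - B₁)/4 * (p₁^2 + q₁^2) := by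
    linear_combination h3 + h4
  have hp₁_sq : (B₁:ℂ)^2 * p₁^2 = 4 * ((lam:ℂ) + μ)^2 * a₂^2 := by
    linear_combination (-4) * (((lam:ℂ) + μ) * a₂ + (B₁:ℂ) * p₁ / 2) * h1
  have hq₁_sq : (B₁:ℂ)^2 * q₁^2 = 4 * ((lam:ℂ) + μ)^2 * a₂^2 := by
    linear_combination (-4) * (-((lam:ℂ) + μ) * a₂ + (B₁:ℂ) * q₁ / 2) * h2
  rw [eq_div_iff hden]
  linear_combination 2 * (B₁:ℂ)^2 * hsum
    + ((B₂:ℂ) - B₁) / 2 * (hp₁_sq + hq₁_sq)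

/-- Formula for a₂² from the coefficient identities of the class 𝒩^{μ,λ}_Σ(φ). -/
theorem stmt_7 (μ lam B₁ B₂ : ℝ) (hlam : 1 ≤ lam) (hμ : 0 ≤ μ) (hB₁ : 0 < B₁)
    (a₂ a₃ p₁ p₂ q₁ q₂ : ℂ)
    (h1 : ((lam:ℂ) + μ) * a₂ = (B₁:ℂ) * p₁ / 2)
    (h2 : -(((lam:ℂ) + μ)) * a₂ = (B₁:ℂ) * q₁ / 2)
    (h3 : (2*(lam:ℂ) + μ) * (a₃ + a₂^2/2 * ((μ:ℂ) - 1))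
        = (B₁:ℂ)/2 * (p₂ - p₁^2/2) + (B₂:ℂ)/4 * p₁^2)
    (h4 : (2*(lam:ℂ) + μ) * (a₂^2/2 * ((μ:ℂ) + 3) - a₃)
        = (B₁:ℂ)/2 * (q₂ - q₁^2/2) + (B₂:ℂ)/4 * q₁^2)
    (hden : (2*((μ:ℂ)+1)*(2*(lam:ℂ)+μ)*(B₁:ℂ)^2 + 4*((B₁:ℂ)-(B₂:ℂ))*((lam:ℂ)+μ)^2) ≠ 0) :
    a₂^2 = (B₁:ℂ)^3 * (p₂ + q₂) /
      (2*((μ:ℂ)+1)*(2*(lam:ℂ)+μ)*(B₁:ℂ)^2 + 4*((B₁:ℂ)-(B₂:ℂ))*((lam:ℂ)+μ)^2) :=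
  stmt_7_general μ lam B₁ B₂ a₂ a₃ p₁ p₂ q₁ q₂ h1 h2 h3 h4 hden
end

section
/- If f ∈ 𝒩^{μ,λ}_Σ(φ) then |a₃ − a₂²| ≤ B₁/(2λ+μ). -/
open Complex Metric

noncomputable def coeff (f : ℂ → ℂ) (n : ℕ) : ℂ := iteratedDeriv n f 0 / n.factorial
 
def IsSchwarz (w : ℂ → ℂ) : Prop :=
  AnalyticOnNhd ℂ w (ball 0 1) ∧ w 0 = 0 ∧ ∀ z ∈ ball (0:ℂ) 1, ‖w z‖ < 1
 
def BiUnivalent (f g : ℂ → ℂ) : Prop :=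
  AnalyticOnNhd ℂ f (ball 0 1) ∧ Set.InjOn f (ball 0 1) ∧ f 0 = 0 ∧ deriv f 0 = 1 ∧
  AnalyticOnNhd ℂ g (ball 0 1) ∧ Set.InjOn g (ball 0 1) ∧
  (∀ᶠ z in nhds (0:ℂ), g (f z) = z) ∧ (∀ᶠ w in nhds (0:ℂ), f (g w) = w)
 
noncomputable def Nexpr (μ lam : ℝ) (f : ℂ → ℂ) (z : ℂ) : ℂ :=
  (1 - (lam:ℂ)) * (f z / z) ^ (μ:ℂ) + (lam:ℂ) * deriv f z * (f z / z) ^ ((μ:ℂ) - 1)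

def MemN (μ lam : ℝ) (φ f g : ℂ → ℂ) : Prop :=
  BiUnivalent f g ∧
  (∃ r, IsSchwarz r ∧ ∀ z ∈ ball (0:ℂ) 1, z ≠ 0 → Nexpr μ lam f z = φ (r z)) ∧
  (∃ s, IsSchwarz s ∧ ∀ w ∈ ball (0:ℂ) 1, w ≠ 0 → Nexpr μ lam g w = φ (s w))

/-!
Write `f = z + a₂ z² + a₃ z³ + ⋯`, `r = c₁ z + c₂ z² + ⋯`, `s = d₁ z + d₂ z² + ⋯`. Inverting the
series gives `g = z - a₂ z² + (2a₂² - a₃) z³ + ⋯`. After removing the singularity of `f z / z`,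
comparing the coefficients of `z` and `z²` in `Nexpr μ lam f = φ ∘ r` gives
`(μ + λ) a₂ = B₁ c₁` and `(μ + 2λ) a₃ + (μ - 1)(μ + 2λ)/2 · a₂² = B₁ c₂ + B₂ c₁²`,
and similarly for `g` and `s`. The first relations force `c₁ = -d₁`, so the `B₂` terms cancel on
subtracting the second ones: `2(μ + 2λ)(a₃ - a₂²) = B₁ (c₂ - d₂)`, and `|c₂|, |d₂| ≤ 1` by
Cauchy's estimate for self-maps of the unit disc.
-/

open Filter Topology

lemma Ring.choose_two_eq {R : Type*} [Field R] [CharZero R] (a : R) :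
    Ring.choose a 2 = a * (a - 1) / 2 := by
  simp [Ring.choose_eq_smul, descPochhammer_succ_right, Polynomial.smeval_mul, Polynomial.smeval_X,
    Polynomial.smeval_sub, div_eq_inv_mul]

lemma AnalyticAt.dslope {F : ℂ → ℂ} {a : ℂ} (hF : AnalyticAt ℂ F a) :
    AnalyticAt ℂ (dslope F a) a :=
  let ⟨_, hp⟩ := hF
  ⟨_, hp.has_fpower_series_dslope_fslope⟩

section Coeff

variable {F G : ℂ → ℂ}

@[simp]
lemma coeff_zero_eq : coeff F 0 = F 0 := by simp [coeff]

lemma coeff_one_eq : coeff F 1 = deriv F 0 := by simp [coeff]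

lemma coeff_id (n : ℕ) : coeff (fun z => z) n = if n = 1 then 1 else 0 := by
  simp only [coeff, iteratedDeriv_fun_id_zero]
  split_ifs <;> simp_all

lemma Filter.EventuallyEq.coeff_eq (h : F =ᶠ[𝓝 0] G) (n : ℕ) : coeff F n = coeff G n := by
  rw [coeff, coeff, h.iteratedDeriv_eq]

lemma HasFPowerSeriesAt.coeff_eq {p : FormalMultilinearSeries ℂ ℂ ℂ}
    (h : HasFPowerSeriesAt F p 0) (n : ℕ) : coeff F n = p.coeff n := by
  obtain ⟨r, hr⟩ := h
  rw [coeff, iteratedDeriv_eq_iteratedFDeriv, ← hr.factorial_smul, nsmul_eq_mul,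
    FormalMultilinearSeries.apply_eq_pow_smul_coeff, one_pow, one_smul,
    mul_div_cancel_left₀ _ (Nat.cast_ne_zero.2 n.factorial_ne_zero)]

lemma coeff_add (hF : AnalyticAt ℂ F 0) (hG : AnalyticAt ℂ G 0) (n : ℕ) :
    coeff (fun z => F z + G z) n = coeff F n + coeff G n := by
  simp only [coeff, iteratedDeriv_fun_add hF.contDiffAt hG.contDiffAt, add_div]

lemma coeff_const_add (c : ℂ) {n : ℕ} (hn : 0 < n) : coeff (fun z => c + F z) n = coeff F n := by
  rw [coeff, iteratedDeriv_const_add hn, coeff]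

lemma coeff_const_mul (c : ℂ) (n : ℕ) : coeff (fun z => c * F z) n = c * coeff F n := by
  simp only [coeff, iteratedDeriv_const_mul_field, mul_div_assoc]

lemma coeff_mul (hF : AnalyticAt ℂ F 0) (hG : AnalyticAt ℂ G 0) (n : ℕ) :
    coeff (fun z => F z * G z) n = ∑ i ∈ Finset.range (n + 1), coeff F i * coeff G (n - i) := by
  simp only [coeff, iteratedDeriv_fun_mul hF.contDiffAt hG.contDiffAt, Finset.sum_div]
  refine Finset.sum_congr rfl fun i hi => ?_
  have hn : (n.factorial : ℂ) ≠ 0 := Nat.cast_ne_zero.2 n.factorial_ne_zero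
  rw [Nat.cast_choose ℂ (Nat.lt_succ_iff.mp (Finset.mem_range.mp hi))]
  field_simp

lemma coeff_deriv (n : ℕ) : coeff (deriv F) n = (n + 1) * coeff F (n + 1) := by
  simp only [coeff, ← iteratedDeriv_succ', Nat.factorial_succ]
  push_cast
  field_simp

lemma coeff_dslope (hF : AnalyticAt ℂ F 0) (n : ℕ) : coeff (dslope F 0) n = coeff F (n + 1) := by
  have hFH : F = fun z => F 0 + z * dslope F 0 z := by
    funext z
    linear_combination (sub_smul_dslope F 0 z).symm
  conv_rhs =>
    rw [hFH, coeff_const_add _ n.succ_pos, coeff_mul (F := fun z => z) analyticAt_id hF.dslope]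
  rw [Finset.sum_eq_single 1]
  · simp [coeff_id]
  · intro i _ hi
    simp [coeff_id, hi]
  · simp

section Comp

variable (hG : AnalyticAt ℂ G 0) (hF : AnalyticAt ℂ F 0) (hF0 : F 0 = 0)
include hG hF hF0

lemma coeff_comp_one : coeff (G ∘ F) 1 = coeff G 1 * coeff F 1 := by
  simp only [coeff_one_eq]
  rw [deriv_comp _ (by rw [hF0]; exact hG.differentiableAt) hF.differentiableAt, hF0]

lemma coeff_comp_two :
    coeff (G ∘ F) 2 = coeff G 1 * coeff F 2 + coeff G 2 * coeff F 1 ^ 2 := by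
  simp only [coeff, iteratedDeriv_comp_two (hF0 ▸ hG.contDiffAt) hF.contDiffAt, hF0,
    iteratedDeriv_one, Nat.factorial_two, Nat.factorial_one, Nat.cast_ofNat, Nat.cast_one, div_one]
  ring

lemma coeff_comp_three :
    coeff (G ∘ F) 3 = coeff G 1 * coeff F 3 + 2 * coeff G 2 * coeff F 1 * coeff F 2
      + coeff G 3 * coeff F 1 ^ 3 := by
  simp only [coeff, iteratedDeriv_comp_three (hF0 ▸ hG.contDiffAt) hF.contDiffAt, hF0,
    iteratedDeriv_one, Nat.factorial, Nat.succ_eq_add_one, Nat.reduceAdd, zero_add, mul_one,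
    Nat.reduceMul, Nat.cast_ofNat, Nat.cast_one, div_one]
  ring

end Comp

lemma coeff_one_add_cpow (a : ℂ) (n : ℕ) : coeff (fun w => (1 + w) ^ a) n = Ring.choose a n := by
  rw [Complex.one_add_cpow_hasFPowerSeriesAt_zero.coeff_eq]
  simp [binomialSeries]

section Cpow

variable {H : ℂ → ℂ} (hH : AnalyticAt ℂ H 0) (hH0 : H 0 = 1) (a : ℂ)
include hH hH0

lemma coeff_cpow_one : coeff (fun z => H z ^ a) 1 = a * coeff H 1 := by
  rw [show (fun z => H z ^ a) = (fun w => (1 + w) ^ a) ∘ (fun z => -1 + H z) by funext z; simp,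
    coeff_comp_one Complex.one_add_cpow_hasFPowerSeriesAt_zero.analyticAt
      (analyticAt_const.fun_add hH) (by simp [hH0]),
    coeff_one_add_cpow, coeff_const_add _ one_pos, Ring.choose_one_right]

lemma coeff_cpow_two :
    coeff (fun z => H z ^ a) 2 = a * coeff H 2 + a * (a - 1) / 2 * coeff H 1 ^ 2 := by
  rw [show (fun z => H z ^ a) = (fun w => (1 + w) ^ a) ∘ (fun z => -1 + H z) by funext z; simp,
    coeff_comp_two Complex.one_add_cpow_hasFPowerSeriesAt_zero.analyticAt
      (analyticAt_const.fun_add hH) (by simp [hH0]),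
    coeff_one_add_cpow, coeff_one_add_cpow, coeff_const_add _ one_pos, coeff_const_add _ two_pos,
    Ring.choose_one_right, Ring.choose_two_eq]

end Cpow

end Coeff

section Nexpr

variable {μ lam : ℝ} {F : ℂ → ℂ}

/-- The analytic extension of `Nexpr μ lam F` across `0` when `F 0 = 0`. -/
noncomputable def nexprExt (μ lam : ℝ) (F : ℂ → ℂ) (z : ℂ) : ℂ :=
  (1 - (lam:ℂ)) * dslope F 0 z ^ (μ:ℂ) + (lam:ℂ) * (deriv F z * dslope F 0 z ^ ((μ:ℂ) - 1))

lemma nexpr_eventuallyEq_nexprExt (hF0 : F 0 = 0) :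
    Nexpr μ lam F =ᶠ[𝓝[≠] 0] nexprExt μ lam F := by
  filter_upwards [self_mem_nhdsWithin] with z hz
  rw [Nexpr, nexprExt, dslope_of_ne F hz, slope_def_field, hF0, sub_zero, sub_zero, mul_assoc]

variable (hF : AnalyticAt ℂ F 0) (hF1 : deriv F 0 = 1)
include hF hF1

lemma analyticAt_dslope_cpow (c : ℂ) : AnalyticAt ℂ (fun z => dslope F 0 z ^ c) 0 :=
  hF.dslope.cpow analyticAt_const (by simp [hF1])

lemma analyticAt_nexprExt : AnalyticAt ℂ (nexprExt μ lam F) 0 :=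
  (analyticAt_const.mul (analyticAt_dslope_cpow hF hF1 _)).add
    (analyticAt_const.mul (hF.deriv.mul (analyticAt_dslope_cpow hF hF1 _)))

lemma coeff_nexprExt (n : ℕ) : coeff (nexprExt μ lam F) n
    = (1 - lam) * coeff (fun z => dslope F 0 z ^ (μ:ℂ)) n + lam * ∑ i ∈ Finset.range (n + 1),
      coeff (deriv F) i * coeff (fun z => dslope F 0 z ^ ((μ:ℂ) - 1)) (n - i) := by
  have hP := analyticAt_dslope_cpow hF hF1 μ
  have hQ := analyticAt_dslope_cpow hF hF1 (μ - 1)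
  unfold nexprExt
  rw [coeff_add (analyticAt_const.fun_mul hP)
    (analyticAt_const.fun_mul (hF.deriv.fun_mul hQ)), coeff_const_mul, coeff_const_mul,
    coeff_mul hF.deriv hQ]

lemma coeff_one_nexprExt : coeff (nexprExt μ lam F) 1 = (μ + lam) * coeff F 2 := by
  have hH0 : dslope F 0 0 = 1 := by simp [hF1]
  simp only [coeff_nexprExt hF hF1, coeff_cpow_one hF.dslope hH0, coeff_dslope hF, coeff_deriv,
    Finset.sum_range_succ, Finset.range_one, Finset.sum_singleton, coeff_zero_eq, coeff_one_eq,
    dslope_same, hF1, one_cpow, Nat.cast_zero, Nat.cast_one, Nat.reduceAdd, Nat.sub_zero,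
    Nat.sub_self]
  ring

lemma coeff_two_nexprExt : coeff (nexprExt μ lam F) 2
    = (μ + 2 * lam) * coeff F 3 + (μ - 1) * (μ + 2 * lam) / 2 * coeff F 2 ^ 2 := by
  have hH0 : dslope F 0 0 = 1 := by simp [hF1]
  simp only [coeff_nexprExt hF hF1, coeff_cpow_two hF.dslope hH0, coeff_cpow_one hF.dslope hH0,
    coeff_dslope hF, coeff_deriv, Finset.sum_range_succ, Finset.range_one, Finset.sum_singleton,
    coeff_zero_eq, coeff_one_eq, dslope_same, hF1, one_cpow, Nat.cast_zero, Nat.cast_one,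
    Nat.cast_ofNat, Nat.reduceAdd, Nat.sub_zero, Nat.add_one_sub_one, Nat.sub_self]
  ring

end Nexpr

lemma coeff_relations_of_nexpr_eq_comp {μ lam : ℝ} {F φ r : ℂ → ℂ} (hF : AnalyticAt ℂ F 0)
    (hF0 : F 0 = 0) (hF1 : deriv F 0 = 1) (hφ : AnalyticAt ℂ φ 0) (hr : AnalyticAt ℂ r 0)
    (hr0 : r 0 = 0) (h : Nexpr μ lam F =ᶠ[𝓝[≠] 0] φ ∘ r) :
    (μ + lam) * coeff F 2 = coeff φ 1 * coeff r 1 ∧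
      (μ + 2 * lam) * coeff F 3 + (μ - 1) * (μ + 2 * lam) / 2 * coeff F 2 ^ 2
        = coeff φ 1 * coeff r 2 + coeff φ 2 * coeff r 1 ^ 2 := by
  have hφr : AnalyticAt ℂ (φ ∘ r) 0 := (hr0 ▸ hφ).comp hr
  have hN : nexprExt μ lam F =ᶠ[𝓝 0] φ ∘ r :=
    ((analyticAt_nexprExt hF hF1).continuousAt.eventuallyEq_nhds_iff_eventuallyEq_nhdsNE
      hφr.continuousAt).1 ((nexpr_eventuallyEq_nexprExt hF0).symm.trans h)
  rw [← coeff_one_nexprExt hF hF1, ← coeff_two_nexprExt hF hF1, hN.coeff_eq, hN.coeff_eq,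
    coeff_comp_one hφ hr hr0, coeff_comp_two hφ hr hr0]
  exact ⟨rfl, rfl⟩

lemma coeff_local_inverse {f g : ℂ → ℂ} (hf : AnalyticAt ℂ f 0) (hg : AnalyticAt ℂ g 0)
    (hf0 : f 0 = 0) (hf1 : deriv f 0 = 1) (hgf : ∀ᶠ z in 𝓝 0, g (f z) = z) :
    deriv g 0 = 1 ∧ coeff g 2 = -coeff f 2 ∧ coeff g 3 = 2 * coeff f 2 ^ 2 - coeff f 3 := by
  have hid (n : ℕ) : coeff (g ∘ f) n = coeff (fun z => z) n :=
    Filter.EventuallyEq.coeff_eq hgf n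
  have hf1' : coeff f 1 = 1 := by rw [coeff_one_eq, hf1]
  have h1 : coeff g 1 = 1 := by simpa [coeff_comp_one hg hf hf0, hf1', coeff_id] using hid 1
  have h2 : coeff g 1 * coeff f 2 + coeff g 2 = 0 := by
    simpa [coeff_comp_two hg hf hf0, hf1', coeff_id] using hid 2
  have h3 : coeff g 1 * coeff f 3 + 2 * coeff g 2 * coeff f 2 + coeff g 3 = 0 := by
    simpa [coeff_comp_three hg hf hf0, hf1', coeff_id] using hid 3
  refine ⟨coeff_one_eq ▸ h1, by linear_combination h2 - coeff f 2 * h1, ?_⟩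
  linear_combination h3 - coeff f 3 * h1 - 2 * coeff f 2 * h2 + 2 * coeff f 2 ^ 2 * h1

lemma norm_coeff_le_one_of_mapsTo {w : ℂ → ℂ} (hw : DifferentiableOn ℂ w (ball 0 1))
    (hb : Set.MapsTo w (ball 0 1) (closedBall 0 1)) (n : ℕ) : ‖coeff w n‖ ≤ 1 := by
  have hρ : ∀ ρ ∈ Set.Ioo (0:ℝ) 1, ‖coeff w n‖ ≤ (ρ ^ n)⁻¹ := by
    rintro ρ ⟨hρ0, hρ1⟩
    have hρball : closedBall (0:ℂ) ρ ⊆ ball 0 1 := closedBall_subset_ball hρ1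
    have hcauchy := Complex.norm_iteratedDeriv_le_of_forall_mem_sphere_norm_le n hρ0
      (hw.diffContOnCl_ball hρball)
      (fun z hz => mem_closedBall_zero_iff.1 (hb (hρball (sphere_subset_closedBall hz))))
    rw [coeff, norm_div, Complex.norm_natCast, div_le_iff₀ (by positivity)]
    calc _ ≤ _ := hcauchy
      _ = _ := by field_simp
  have hcont : ContinuousAt (fun ρ : ℝ => (ρ ^ n)⁻¹) 1 := (continuousAt_pow 1 n).inv₀ (by simp)
  have hlim : Tendsto (fun ρ : ℝ => (ρ ^ n)⁻¹) (𝓝[<] 1) (𝓝 1) := by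
    simpa using hcont.tendsto.mono_left nhdsWithin_le_nhds
  exact ge_of_tendsto hlim (eventually_of_mem (Ioo_mem_nhdsLT one_pos) hρ)

lemma IsSchwarz.norm_coeff_le_one {w : ℂ → ℂ} (hw : IsSchwarz w) (n : ℕ) : ‖coeff w n‖ ≤ 1 :=
  norm_coeff_le_one_of_mapsTo hw.1.differentiableOn
    (fun z hz => mem_closedBall_zero_iff.2 (hw.2.2 z hz).le) n

theorem stmt_11_general (μ lam B₁ : ℝ) (hlam : 1 ≤ lam) (hμ : 0 ≤ μ)
    (φ f g : ℂ → ℂ)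
    (hφa : AnalyticOnNhd ℂ φ (ball 0 1))
    (hB1 : coeff φ 1 = (B₁:ℂ)) (hB1pos : 0 < B₁)
    (hmem : MemN μ lam φ f g) :
    ‖coeff f 3 - (coeff f 2)^2‖ ≤ B₁ / (2*lam+μ) := by
  obtain ⟨⟨hfa, -, hf0, hf1, hga, -, hgf, -⟩, ⟨r, hr, hfr⟩, ⟨s, hs, hgs⟩⟩ := hmem
  have h0 : (0:ℂ) ∈ ball (0:ℂ) 1 := mem_ball_self one_pos
  have punctured {P : ℂ → Prop} (h : ∀ z ∈ ball (0:ℂ) 1, z ≠ 0 → P z) : ∀ᶠ z in 𝓝[≠] 0, P z :=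
    eventually_nhdsWithin_iff.2 (mem_of_superset (ball_mem_nhds 0 one_pos) h)
  have hg0 : g 0 = 0 := by simpa [hf0] using hgf.self_of_nhds
  obtain ⟨hg1, hg2, hg3⟩ := coeff_local_inverse (hfa 0 h0) (hga 0 h0) hf0 hf1 hgf
  obtain ⟨hf₂, hf₃⟩ := coeff_relations_of_nexpr_eq_comp (hfa 0 h0) hf0 hf1 (hφa 0 h0)
    (hr.1 0 h0) hr.2.1 (punctured hfr)
  obtain ⟨hg₂, hg₃⟩ := coeff_relations_of_nexpr_eq_comp (hga 0 h0) hg0 hg1 (hφa 0 h0)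
    (hs.1 0 h0) hs.2.1 (punctured hgs)
  simp only [hB1, hg2, hg3] at hf₂ hf₃ hg₂ hg₃
  have hrs : coeff r 1 = -coeff s 1 :=
    mul_left_cancel₀ (ofReal_ne_zero.2 hB1pos.ne') (by linear_combination -hf₂ - hg₂)
  have key : ((2 * (2 * lam + μ) : ℝ) : ℂ) * (coeff f 3 - coeff f 2 ^ 2)
      = B₁ * (coeff r 2 - coeff s 2) := by
    push_cast
    linear_combination hf₃ - hg₃ + coeff φ 2 * (coeff r 1 - coeff s 1) * hrs
  have hnorm := congrArg norm key
  rw [norm_mul, norm_mul, norm_real, norm_real, Real.norm_of_nonneg (by positivity),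
    Real.norm_of_nonneg hB1pos.le] at hnorm
  have hbound : ‖coeff r 2 - coeff s 2‖ ≤ 2 :=
    (norm_sub_le _ _).trans (by linarith [hr.norm_coeff_le_one 2, hs.norm_coeff_le_one 2])
  rw [le_div_iff₀ (by positivity)]
  linarith [mul_le_mul_of_nonneg_left hbound hB1pos.le]

/-- For f ∈ 𝒩^{μ,λ}_Σ(φ), |a₃ - a₂²| ≤ B₁/(2λ+μ). -/
theorem stmt_11 (μ lam B₁ B₂ : ℝ) (hlam : 1 ≤ lam) (hμ : 0 ≤ μ)
    (φ f g : ℂ → ℂ)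
    (hφa : AnalyticOnNhd ℂ φ (ball 0 1)) (hφ0 : φ 0 = 1)
    (hφre : ∀ z ∈ ball (0:ℂ) 1, 0 < (φ z).re)
    (hφreal : ∀ n, (coeff φ n).im = 0)
    (hB1 : coeff φ 1 = (B₁:ℂ)) (hB2 : coeff φ 2 = (B₂:ℂ)) (hB1pos : 0 < B₁)
    (hmem : MemN μ lam φ f g) :
    ‖coeff f 3 - (coeff f 2)^2‖ ≤ B₁ / (2*lam+μ) :=
  stmt_11_general μ lam B₁ hlam hμ φ f g hφa hB1 hB1pos hmem
end
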